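/- arXiv:1502.03484 — 3 statements merged into one kernel-verified Lean document; each statement's English description precedes it below -/
import Mathlib

section
/- For polynomials f, g over a commutative ring R with f of degree at most n-1 (i.e., f has n coefficients), the content ideals satisfy c(fg)·c(g)^{n-1} = c(f)·c(g)^n, where c(h) denotes the ideal of R generated by the coefficients of h. -/
/-!
The inclusion `c(fg) c(g)^(n-1) ≤ c(f) c(g)^n` follows from `c(fg) ≤ c(f) c(g)`. For the other
one, let `A = coeffMatrix g k` be the `n × n` submatrix, on rows `k`, of the matrix of
multiplication by `g` on polynomials of degree `< n`. Then `A` maps the coefficient vector of `f`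
to coefficients of `fg`, and as the adjugate of `A` has entries in `c(g)^(n-1)`, Cramer's rule
gives `det A · f_s ∈ c(fg) c(g)^(n-1)`. It remains to see that these determinants generate an
ideal containing every product `g_{α_1} ⋯ g_{α_n}`, hence `c(g)^n`. Sort `α` increasingly and
take the rows `k_t = α_t + t`: the diagonal term of `det A` is that product, and by the
rearrangement inequality every other term is `± g_{α'_1} ⋯ g_{α'_n}` with `∑ α'_t² > ∑ α_t²`.
Since the product vanishes unless `0 ≤ α_t ≤ deg g` for all `t`, induction on `∑ α_t²` from
above concludes.
-/

def contentIdeal {R : Type*} [CommRing R] (f : Polynomial R) : Ideal R :=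
  Ideal.span (Set.range f.coeff)

open scoped Polynomial Matrix
open Finset

section

variable {R : Type*} [CommRing R]

theorem contentIdeal_eq_polynomial_contentIdeal (f : R[X]) : contentIdeal f = f.contentIdeal :=
  le_antisymm (Ideal.span_le.2 <| Set.range_subset_iff.2 f.coeff_mem_contentIdeal)
    (Ideal.span_mono fun _ hc => by
      obtain ⟨i, -, rfl⟩ := Polynomial.mem_coeffs_iff.1 hc
      exact ⟨i, rfl⟩)

namespace Matrix

theorem det_mem_pow_card {ι : Type*} [Fintype ι] [DecidableEq ι] {I : Ideal R}
    {A : Matrix ι ι R} (hA : ∀ i j, A i j ∈ I) : A.det ∈ I ^ Fintype.card ι := by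
  rw [det_apply', ← card_univ, ← prod_const]
  exact Ideal.sum_mem _ fun _ _ =>
    Ideal.mul_mem_left _ _ (Ideal.prod_mem_prod fun _ _ => hA _ _)

theorem adjugate_mem_pow {m : ℕ} {I : Ideal R} {A : Matrix (Fin (m + 1)) (Fin (m + 1)) R}
    (hA : ∀ i j, A i j ∈ I) (i j : Fin (m + 1)) : A.adjugate i j ∈ I ^ m := by
  rw [adjugate_fin_succ_eq_det_submatrix]
  have := det_mem_pow_card (A := A.submatrix j.succAbove i.succAbove) fun _ _ => hA _ _
  simpa using Ideal.mul_mem_left _ _ this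

theorem det_mul_mem_mul_pow_of_mulVec_eq {m : ℕ} {I J : Ideal R}
    {A : Matrix (Fin (m + 1)) (Fin (m + 1)) R} {x b : Fin (m + 1) → R}
    (hA : ∀ i j, A i j ∈ I) (hb : ∀ i, b i ∈ J) (hx : A *ᵥ x = b) (i : Fin (m + 1)) :
    A.det * x i ∈ J * I ^ m := by
  have hcramer : A.det • x = A.adjugate *ᵥ b := by
    rw [← hx, mulVec_mulVec, adjugate_mul, smul_mulVec, one_mulVec]
  rw [← smul_eq_mul (A.det), ← Pi.smul_apply, hcramer]
  exact Ideal.sum_mem (t := univ) _ fun j _ =>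
    Ideal.mul_mem_mul_rev (hb j) (adjugate_mem_pow hA i j)

end Matrix

theorem Monotone.sum_sq_lt_sum_sq_perm_shift {n : ℕ} {β : Fin n → ℤ} (hβ : Monotone β)
    {σ : Equiv.Perm (Fin n)} (hσ : σ ≠ 1) :
    ∑ t, β t ^ 2 < ∑ t, (β (σ t) + (σ t : ℕ) - (t : ℕ)) ^ 2 := by
  have hsq : ∑ t, β (σ t) ^ 2 = ∑ t, β t ^ 2 := Equiv.sum_comp σ (fun t => β t ^ 2)
  have hrearr : ∑ t, β (σ t) * (t : ℕ) ≤ ∑ t, β (σ t) * (σ t : ℕ) := by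
    rw [Equiv.sum_comp σ (fun t => β t * (t : ℕ))]
    exact (hβ.monovary fun _ _ h => Nat.cast_le.2 h).sum_comp_perm_smul_le_sum_smul
  have hmoved : 1 ≤ ∑ t, ((σ t : ℕ) - (t : ℕ) : ℤ) ^ 2 := by
    obtain ⟨t, ht⟩ : ∃ t, σ t ≠ t := not_forall.1 fun h => hσ (Equiv.ext h)
    have hne : ((σ t : ℕ) - (t : ℕ) : ℤ) ≠ 0 := by
      have := Fin.val_injective.ne ht
      omega
    calc 1 ≤ ((σ t : ℕ) - (t : ℕ) : ℤ) ^ 2 := sq_pos_of_ne_zero hne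
      _ ≤ _ := single_le_sum (f := fun t => ((σ t : ℕ) - (t : ℕ) : ℤ) ^ 2)
          (fun _ _ => sq_nonneg _) (mem_univ t)
  have hexpand : ∑ t, (β (σ t) + (σ t : ℕ) - (t : ℕ)) ^ 2 = ∑ t, β (σ t) ^ 2
      + 2 * (∑ t, β (σ t) * (σ t : ℕ) - ∑ t, β (σ t) * (t : ℕ))
      + ∑ t, ((σ t : ℕ) - (t : ℕ) : ℤ) ^ 2 := by
    rw [← sum_sub_distrib, mul_sum, ← sum_add_distrib, ← sum_add_distrib]
    exact sum_congr rfl fun _ _ => by ring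
  linarith

namespace Polynomial

noncomputable def intCoeff (g : R[X]) (z : ℤ) : R :=
  if 0 ≤ z then g.coeff z.toNat else 0

theorem intCoeff_mem_contentIdeal (g : R[X]) (z : ℤ) : g.intCoeff z ∈ g.contentIdeal := by
  unfold intCoeff
  split
  · exact g.coeff_mem_contentIdeal _
  · exact zero_mem _

@[simp]
theorem intCoeff_natCast (g : R[X]) (k : ℕ) : g.intCoeff k = g.coeff k := by
  simp [intCoeff]

theorem intCoeff_of_neg (g : R[X]) {z : ℤ} (hz : z < 0) : g.intCoeff z = 0 :=
  if_neg hz.not_ge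

theorem intCoeff_of_natDegree_lt (g : R[X]) {z : ℤ} (hz : g.natDegree < z) :
    g.intCoeff z = 0 := by
  unfold intCoeff
  split
  · exact g.coeff_eq_zero_of_natDegree_lt (by omega)
  · rfl

theorem intCoeff_natCast_sub (g : R[X]) (k i : ℕ) :
    g.intCoeff (k - i) = (X ^ i * g).coeff k := by
  rw [coeff_X_pow_mul', intCoeff]
  split_ifs <;> first | rfl | omega | (congr 1; omega)

theorem sum_coeff_mul_intCoeff_sub {f : R[X]} {n : ℕ} (hf : f.natDegree < n) (g : R[X])
    (z : ℤ) :
    ∑ s : Fin n, f.coeff s * g.intCoeff (z - s) = (f * g).intCoeff z := by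
  obtain hz | ⟨k, rfl⟩ := z.lt_or_le 0 |>.imp_right Int.eq_ofNat_of_zero_le
  · rw [intCoeff_of_neg _ hz]
    exact sum_eq_zero fun s _ => by rw [intCoeff_of_neg _ (by omega), mul_zero]
  · conv_rhs => rw [f.as_sum_range_C_mul_X_pow' hf]
    simp only [intCoeff_natCast, sum_mul, finsetSum_coeff, mul_assoc, coeff_C_mul,
      ← intCoeff_natCast_sub]
    exact Fin.sum_univ_eq_sum_range (fun i => f.coeff i * g.intCoeff (k - i)) n

noncomputable def coeffMatrix (g : R[X]) {n : ℕ} (k : Fin n → ℤ) : Matrix (Fin n) (Fin n) R :=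
  Matrix.of fun t s => g.intCoeff (k t - s)

noncomputable def coeffMinorIdeal (g : R[X]) (n : ℕ) : Ideal R :=
  Ideal.span (Set.range fun k : Fin n → ℤ => (g.coeffMatrix k).det)

theorem coeffMatrix_mulVec_coeff {f : R[X]} {n : ℕ} (hf : f.natDegree < n) (g : R[X])
    (k : Fin n → ℤ) :
    g.coeffMatrix k *ᵥ (fun s => f.coeff s) = fun t => (f * g).intCoeff (k t) := by
  ext t
  rw [← sum_coeff_mul_intCoeff_sub hf]
  simp [Matrix.mulVec, dotProduct, coeffMatrix, mul_comm]

theorem det_coeffMatrix_mul_coeff_mem {f : R[X]} {m : ℕ} (hf : f.natDegree < m + 1) (g : R[X])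
    (k : Fin (m + 1) → ℤ) (s : Fin (m + 1)) :
    (g.coeffMatrix k).det * f.coeff s ∈ (f * g).contentIdeal * g.contentIdeal ^ m :=
  Matrix.det_mul_mem_mul_pow_of_mulVec_eq (fun _ _ => g.intCoeff_mem_contentIdeal _)
    (fun _ => (f * g).intCoeff_mem_contentIdeal _) (coeffMatrix_mulVec_coeff hf g k) s

theorem prod_intCoeff_mem_coeffMinorIdeal_of_monotone (g : R[X]) {n : ℕ} {β : Fin n → ℤ}
    (hβ : Monotone β)
    (ih : ∀ α : Fin n → ℤ, ∑ t, β t ^ 2 < ∑ t, α t ^ 2 →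
      ∏ t, g.intCoeff (α t) ∈ g.coeffMinorIdeal n) :
    ∏ t, g.intCoeff (β t) ∈ g.coeffMinorIdeal n := by
  have hdet : (g.coeffMatrix fun t => β t + (t : ℕ)).det = ∏ t, g.intCoeff (β t) +
      ∑ σ ∈ univ.erase (1 : Equiv.Perm (Fin n)),
        σ.sign • ∏ t, g.intCoeff (β (σ t) + (σ t : ℕ) - (t : ℕ)) := by
    rw [Matrix.det_apply, ← add_sum_erase _ _ (mem_univ 1)]
    simp [coeffMatrix]
  rw [eq_sub_of_add_eq hdet.symm]
  refine sub_mem (Ideal.subset_span ⟨_, rfl⟩) (sum_mem fun σ hσ => ?_)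
  rw [Units.smul_def]
  exact zsmul_mem (ih _ (hβ.sum_sq_lt_sum_sq_perm_shift (ne_of_mem_erase hσ))) _

theorem prod_intCoeff_mem_coeffMinorIdeal (g : R[X]) {n : ℕ} (α : Fin n → ℤ) :
    ∏ t, g.intCoeff (α t) ∈ g.coeffMinorIdeal n := by
  induction hN : (n * g.natDegree ^ 2 + 1 - ∑ t, α t ^ 2 : ℤ).toNat
    using Nat.strong_induction_on generalizing α with
  | _ N ih =>
  by_cases hbox : ∀ t, 0 ≤ α t ∧ α t ≤ g.natDegree
  · have hbound : ∑ t, α t ^ 2 ≤ n * g.natDegree ^ 2 := by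
      simpa using sum_le_card_nsmul univ (fun t => α t ^ 2) _ fun t _ =>
        pow_le_pow_left₀ (hbox t).1 (hbox t).2 2
    rw [← Equiv.prod_comp (Tuple.sort α) fun t => g.intCoeff (α t)]
    refine prod_intCoeff_mem_coeffMinorIdeal_of_monotone g (Tuple.monotone_sort α)
      fun α' hα' => ih _ ?_ α' rfl
    rw [Equiv.sum_comp (Tuple.sort α) fun t => α t ^ 2] at hα'
    omega
  · push Not at hbox
    obtain ⟨t, ht⟩ := hbox
    have hzero : g.intCoeff (α t) = 0 := by
      by_cases h : 0 ≤ α t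
      · exact g.intCoeff_of_natDegree_lt (ht h)
      · exact g.intCoeff_of_neg (not_le.1 h)
    rw [prod_eq_zero (mem_univ t) hzero]
    exact zero_mem _

theorem contentIdeal_pow_le_coeffMinorIdeal (g : R[X]) (n : ℕ) :
    g.contentIdeal ^ n ≤ g.coeffMinorIdeal n := by
  rw [contentIdeal_def, Ideal.span, Submodule.span_pow, Submodule.span_le]
  intro x hx
  obtain ⟨v, rfl⟩ := Set.mem_pow.1 hx
  choose i hi using fun t => mem_coeffs_iff.1 (v t).2
  rw [List.prod_ofFn]
  simpa [← (hi _).2] using prod_intCoeff_mem_coeffMinorIdeal g fun t => (i t : ℤ)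

theorem contentIdeal_mul_contentIdeal_pow_le {f : R[X]} {m : ℕ} (hf : f.natDegree < m + 1)
    (g : R[X]) :
    f.contentIdeal * g.contentIdeal ^ (m + 1) ≤ (f * g).contentIdeal * g.contentIdeal ^ m :=
  calc _ ≤ f.contentIdeal * g.coeffMinorIdeal (m + 1) :=
        Ideal.mul_mono_right (contentIdeal_pow_le_coeffMinorIdeal g _)
    _ ≤ _ := by
      rw [contentIdeal_def, coeffMinorIdeal, Ideal.span_mul_span', Ideal.span_le,
        Set.mul_subset_iff]
      rintro _ hc _ ⟨k, rfl⟩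
      obtain ⟨s, hs, rfl⟩ := mem_coeffs_iff.1 hc
      rw [mul_comm (f.coeff s)]
      exact det_coeffMatrix_mul_coeff_mem hf g k
        ⟨s, (le_natDegree_of_mem_supp s hs).trans_lt hf⟩

end Polynomial

end

/-- **Dedekind–Mertens formula**: for polynomials `f, g` over a commutative ring `R`,
with `f` having `n` coefficients (i.e. `natDegree f < n`),
`c(fg) · c(g)^(n-1) = c(f) · c(g)^n`. -/
theorem dedekind_mertens {R : Type*} [CommRing R] (f g : Polynomial R) (n : ℕ)
    (hn : f.natDegree < n) :
    contentIdeal (f * g) * contentIdeal g ^ (n - 1) =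
      contentIdeal f * contentIdeal g ^ n := by
  obtain ⟨m, rfl⟩ : ∃ m, n = m + 1 := Nat.exists_eq_add_one_of_ne_zero (by omega)
  simp only [contentIdeal_eq_polynomial_contentIdeal, Nat.add_sub_cancel]
  refine le_antisymm ?_ (Polynomial.contentIdeal_mul_contentIdeal_pow_le hn g)
  calc (f * g).contentIdeal * g.contentIdeal ^ m
      ≤ f.contentIdeal * g.contentIdeal * g.contentIdeal ^ m :=
        Ideal.mul_mono_left (f.contentIdeal_mul_le_mul_contentIdeal g)
    _ = f.contentIdeal * g.contentIdeal ^ (m + 1) := by rw [mul_assoc, ← pow_succ']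
end

section
/- If f, g are polynomials over a commutative ring R and f has n coefficients, then c(fg)·[c(f)·c(g)]^{n-1} = [c(f)·c(g)]^n; in particular c(fg) is a reduction of c(f)·c(g). -/
/-- `J` is a reduction of `I`: `J ⊆ I` and `J·I^r = I^(r+1)` for some `r ≥ 0`. -/
def IsReduction {R : Type*} [CommRing R] (J I : Ideal R) : Prop :=
  J ≤ I ∧ ∃ r : ℕ, J * I ^ r = I ^ (r + 1)

/-! The decayed formula is a rearrangement of the Dedekind–Mertens inequality
`c(f)^(m+1) c(g) ≤ c(f)^m c(fg)` for `deg g ≤ m` (applied with `f` and `g` swapped), combined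
with `c(fg) ≤ c(f) c(g)`.

Dedekind–Mertens goes by induction on `m`: write `g = g' + b X^k` with `k = deg g`. As
`c(fg') ≤ c(fg) + b c(f)`, the inductive hypothesis for `g'` reduces everything to
`b c(f)^(m+1) ≤ c(f)^m c(fg)`, which is proved coefficient by coefficient of `f`, from the top
down: `a_i b` is the difference of the `(i+k)`-th coefficients of `fg` and `fg'`, and the latter
only involves the `a_u` with `u > i`, already handled. -/

open scoped Polynomial
open Ideal

namespace Polynomial

variable {R : Type*} [CommRing R]

theorem span_range_coeff (p : R[X]) : span (Set.range p.coeff) = p.contentIdeal := by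
  refine le_antisymm (span_le.2 <| Set.range_subset_iff.2 p.coeff_mem_contentIdeal) (span_mono ?_)
  intro c hc
  obtain ⟨n, -, rfl⟩ := mem_coeffs_iff.1 hc
  exact ⟨n, rfl⟩

theorem contentIdeal_le_iff {p : R[X]} {I : Ideal R} :
    p.contentIdeal ≤ I ↔ ∀ n, p.coeff n ∈ I := by
  rw [← span_range_coeff, span_le, Set.range_subset_iff]
  rfl

theorem contentIdeal_add_le (p q : R[X]) :
    (p + q).contentIdeal ≤ p.contentIdeal ⊔ q.contentIdeal :=
  contentIdeal_le_iff.2 fun n => coeff_add p q n ▸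
    add_mem (mem_sup_left (p.coeff_mem_contentIdeal n)) (mem_sup_right (q.coeff_mem_contentIdeal n))

theorem contentIdeal_sub_le (p q : R[X]) :
    (p - q).contentIdeal ≤ p.contentIdeal ⊔ q.contentIdeal :=
  contentIdeal_le_iff.2 fun n => coeff_sub p q n ▸
    sub_mem (mem_sup_left (p.coeff_mem_contentIdeal n)) (mem_sup_right (q.coeff_mem_contentIdeal n))

theorem contentIdeal_C_mul (r : R) (p : R[X]) :
    (C r * p).contentIdeal = span {r} * p.contentIdeal := by
  refine le_antisymm (contentIdeal_C r ▸ contentIdeal_mul_le_mul_contentIdeal _ _) ?_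
  rw [← span_range_coeff, span_mul_span', span_le]
  rintro _ ⟨s, hs, _, ⟨n, rfl⟩, rfl⟩
  dsimp only
  rw [Set.mem_singleton_iff.1 hs, ← coeff_C_mul]
  exact coeff_mem_contentIdeal _ n

def tailContentIdeal (p : R[X]) (i : ℕ) : Ideal R :=
  span (p.coeff '' Set.Ici i)

theorem tailContentIdeal_zero (p : R[X]) : p.tailContentIdeal 0 = p.contentIdeal := by
  simp [tailContentIdeal, span_range_coeff]

theorem tailContentIdeal_le (p : R[X]) (i : ℕ) : p.tailContentIdeal i ≤ p.contentIdeal :=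
  span_le.2 <| Set.image_subset_iff.2 fun n _ => p.coeff_mem_contentIdeal n

theorem tailContentIdeal_eq_bot {p : R[X]} {i : ℕ} (h : p.natDegree < i) :
    p.tailContentIdeal i = ⊥ :=
  span_eq_bot.2 <| Set.forall_mem_image.2 fun _ hn => coeff_eq_zero_of_natDegree_lt (h.trans_le hn)

theorem tailContentIdeal_eq_sup (p : R[X]) (i : ℕ) :
    p.tailContentIdeal i = span {p.coeff i} ⊔ p.tailContentIdeal (i + 1) := by
  have : Set.Ici i = insert i (Set.Ici (i + 1)) := by ext; simp; omega
  rw [tailContentIdeal, this, Set.image_insert_eq, span_insert, tailContentIdeal]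

theorem coeff_mul_add_mem {p q : R[X]} {k : ℕ} (hq : ∀ v ≥ k, q.coeff v = 0) (i : ℕ) :
    (p * q).coeff (i + k) ∈ p.tailContentIdeal (i + 1) * q.contentIdeal := by
  rw [coeff_mul]
  refine sum_mem fun uv huv => ?_
  rw [Finset.HasAntidiagonal.mem_antidiagonal] at huv
  by_cases hu : uv.1 ≤ i
  · rw [hq uv.2 (by omega), mul_zero]
    exact zero_mem _
  · exact mul_mem_mul (subset_span ⟨uv.1, by simp; omega, rfl⟩) (q.coeff_mem_contentIdeal _)

theorem contentIdeal_mul_le_of_add_monomial (f g : R[X]) (k : ℕ) (b : R) :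
    (f * g).contentIdeal ≤ (f * (g + monomial k b)).contentIdeal + span {b} * f.contentIdeal := by
  have hfg : f * g = f * (g + monomial k b) - f * monomial k b := by ring
  rw [hfg, mul_comm (span {b}), ← contentIdeal_monomial k b]
  exact (contentIdeal_sub_le _ _).trans (sup_le_sup_left (contentIdeal_mul_le_mul_contentIdeal _ _) _)

theorem span_mul_tailContentIdeal_mul_pow_le {f g : R[X]} {k m : ℕ} (b : R)
    (hg : ∀ v ≥ k, g.coeff v = 0)
    (ih : f.contentIdeal ^ (m + 1) * g.contentIdeal ≤ f.contentIdeal ^ m * (f * g).contentIdeal)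
    (i : ℕ) :
    span {b} * f.tailContentIdeal i * f.contentIdeal ^ (m + 1) ≤
      f.contentIdeal ^ (m + 1) * (f * (g + monomial k b)).contentIdeal := by
  set I := f.contentIdeal
  set J := (f * (g + monomial k b)).contentIdeal
  set T := I ^ (m + 1) * J
  induction i using Nat.strong_decreasing_induction with
  | base => exact ⟨f.natDegree, fun i hi => by simp [tailContentIdeal_eq_bot hi]⟩
  | step i hi =>
    set S := f.tailContentIdeal (i + 1)
    have hcoeff : f.coeff i * b ∈ J + S * g.contentIdeal := by
      have : f.coeff i * b = (f * (g + monomial k b)).coeff (i + k) - (f * g).coeff (i + k) := by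
        rw [mul_add, coeff_add, coeff_mul_monomial]
        ring
      rw [this]
      exact sub_mem (mem_sup_left (coeff_mem_contentIdeal _ _)) (mem_sup_right (coeff_mul_add_mem hg i))
    calc span {b} * f.tailContentIdeal i * I ^ (m + 1)
        = span {f.coeff i * b} * I ^ (m + 1) + span {b} * S * I ^ (m + 1) := by
          rw [tailContentIdeal_eq_sup, ← span_singleton_mul_span_singleton, ← Submodule.add_eq_sup]
          ring
      _ ≤ (J + S * g.contentIdeal) * I ^ (m + 1) + T := by
          gcongr
          · exact (span_singleton_le_iff_mem _).2 hcoeff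
          · exact hi (i + 1) (lt_add_one i)
      _ = T + S * (I ^ (m + 1) * g.contentIdeal) + T := by ring
      _ ≤ T + S * (I ^ m * (J + span {b} * I)) + T := by
          gcongr T + S * ?_ + T
          exact ih.trans (by gcongr; exact contentIdeal_mul_le_of_add_monomial f g k b)
      _ = T + S * I ^ m * J + span {b} * S * I ^ (m + 1) + T := by ring
      _ ≤ T + I * I ^ m * J + T + T := by
          gcongr
          · exact f.tailContentIdeal_le _
          · exact hi (i + 1) (lt_add_one i)
      _ = T := by
          rw [← pow_succ']
          change T + T + T + T = T
          simp

theorem dedekind_mertens_add_monomial {f g : R[X]} {k m : ℕ} (b : R)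
    (hg : ∀ v ≥ k, g.coeff v = 0)
    (ih : f.contentIdeal ^ (m + 1) * g.contentIdeal ≤ f.contentIdeal ^ m * (f * g).contentIdeal) :
    f.contentIdeal ^ (m + 2) * (g + monomial k b).contentIdeal ≤
      f.contentIdeal ^ (m + 1) * (f * (g + monomial k b)).contentIdeal := by
  set I := f.contentIdeal
  set J := (f * (g + monomial k b)).contentIdeal
  set T := I ^ (m + 1) * J
  have hb : span {b} * I * I ^ (m + 1) ≤ T := by
    simpa only [tailContentIdeal_zero] using span_mul_tailContentIdeal_mul_pow_le b hg ih 0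
  calc I ^ (m + 2) * (g + monomial k b).contentIdeal
      ≤ I ^ (m + 2) * (g.contentIdeal + span {b}) := by
        gcongr
        exact contentIdeal_monomial k b ▸ contentIdeal_add_le _ _
    _ = I * (I ^ (m + 1) * g.contentIdeal) + span {b} * I * I ^ (m + 1) := by ring
    _ ≤ I * (I ^ m * (J + span {b} * I)) + T := by
        gcongr I * ?_ + ?_
        exact ih.trans (by gcongr; exact contentIdeal_mul_le_of_add_monomial f g k b)
    _ = T + span {b} * I * I ^ (m + 1) + T := by ring
    _ ≤ T + T + T := by gcongr
    _ = T := by simp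

theorem dedekind_mertens (f : R[X]) {g : R[X]} {m : ℕ} (hg : g.natDegree ≤ m) :
    f.contentIdeal ^ (m + 1) * g.contentIdeal ≤ f.contentIdeal ^ m * (f * g).contentIdeal := by
  induction m generalizing g with
  | zero =>
    obtain ⟨b, rfl⟩ := natDegree_eq_zero.1 (Nat.le_zero.1 hg)
    rw [zero_add, pow_one, pow_zero, one_mul, mul_comm f, contentIdeal_C_mul, contentIdeal_C, mul_comm]
  | succ m ih =>
    have hlead : ∀ v ≥ g.natDegree, g.eraseLead.coeff v = 0 := fun v hv => by
      rw [eraseLead_coeff]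
      split_ifs with h
      · rfl
      · exact coeff_eq_zero_of_natDegree_lt (lt_of_le_of_ne hv (Ne.symm h))
    have := dedekind_mertens_add_monomial g.leadingCoeff hlead
      (ih ((eraseLead_natDegree_le g).trans (by omega)))
    rwa [eraseLead_add_monomial_natDegree_leadingCoeff] at this

theorem contentIdeal_mul_mul_pow_eq (f g : R[X]) {r : ℕ} (hf : f.natDegree ≤ r) :
    (f * g).contentIdeal * (f.contentIdeal * g.contentIdeal) ^ r =
      (f.contentIdeal * g.contentIdeal) ^ (r + 1) := by
  refine le_antisymm ?_ ?_
  · rw [pow_succ']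
    gcongr
    exact contentIdeal_mul_le_mul_contentIdeal f g
  · calc (f.contentIdeal * g.contentIdeal) ^ (r + 1)
        = f.contentIdeal ^ r * (g.contentIdeal ^ (r + 1) * f.contentIdeal) := by ring
      _ ≤ f.contentIdeal ^ r * (g.contentIdeal ^ r * (g * f).contentIdeal) :=
        mul_le_mul_right (dedekind_mertens g hf) _
      _ = (f * g).contentIdeal * (f.contentIdeal * g.contentIdeal) ^ r := by
        rw [mul_comm g]
        ring

end Polynomial

/-- The 'decayed' Dedekind–Mertens content formula: if `f` has `n` coefficients then
`c(fg)·[c(f)·c(g)]^(n-1) = [c(f)·c(g)]^n`; in particular `c(fg)` is a reduction of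
`c(f)·c(g)`. -/
theorem decayed_dedekind_mertens {R : Type*} [CommRing R] (f g : Polynomial R) (n : ℕ)
    (hn : f.natDegree < n) :
    contentIdeal (f * g) * (contentIdeal f * contentIdeal g) ^ (n - 1) =
        (contentIdeal f * contentIdeal g) ^ n ∧
      IsReduction (contentIdeal (f * g)) (contentIdeal f * contentIdeal g) := by
  obtain ⟨r, rfl⟩ : ∃ r, n = r + 1 := ⟨n - 1, by omega⟩
  have h := Polynomial.contentIdeal_mul_mul_pow_eq f g (Nat.lt_succ_iff.1 hn)
  simp only [contentIdeal, Polynomial.span_range_coeff, Nat.add_sub_cancel]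
  exact ⟨h, Polynomial.contentIdeal_mul_le_mul_contentIdeal f g, r, h⟩
end

section
/- The edge subring of the complete graph K_{n+1} (the K-subalgebra of K[x_1,…,x_{n+1}] generated by all x_i x_j with i < j), standard graded with generators in degree 1, has multiplicity 2^n - (n+1) for n ≥ 2. -/
open MvPolynomial

/-- The degree-`j` component of the edge subring of the complete graph `K_{n+1}`: the
`K`-span of all products of `j` squarefree quadratic monomials `x_a x_b` (`a ≠ b`). -/
noncomputable def edgeSubringComponent (K : Type*) [Field K] (n j : ℕ) :
    Submodule K (MvPolynomial (Fin (n + 1)) K) :=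
  Submodule.span K {f | ∃ g : Fin j → MvPolynomial (Fin (n + 1)) K,
    (∀ t, ∃ a b : Fin (n + 1), a ≠ b ∧ g t = X a * X b) ∧ f = ∏ t, g t}

/-!
The degree-`j` component is spanned by the monomials it contains, and a monomial `x^a` of
degree `2j` is a product of `j` edges `x_u x_v` exactly when every exponent is at most `j`:
peeling off an edge at the two largest exponents preserves this bound. So the Hilbert function
counts the exponent vectors of degree `2j` with all entries `≤ j`. A vector of degree `2j` has at
most one entry `> j`, and subtracting `j + 1` from that entry identifies the vectors that have
one with `n + 1` copies of the vectors of degree `j - 1`. Hence `h(j) = C(2j+n, n) - (n+1) C(j+n-1, n)`, which is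
`(P(2j+1) - (n+1) P(j)) / n!` for the rising factorial `P(x) = x (x+1) ⋯ (x+n-1)`: a polynomial of
degree `n` with leading coefficient `(2^n - (n+1)) / n!`.
-/

open Finset

universe w

section BoundedExponents

variable {σ : Type w}

noncomputable def edgeExponent (u v : σ) : σ →₀ ℕ := Finsupp.single u 1 + Finsupp.single v 1

lemma exists_ne_forall_le [Finite σ] [Nontrivial σ] (a : σ → ℕ) :
    ∃ u v, u ≠ v ∧ (∀ i, a i ≤ a u) ∧ ∀ i ≠ u, a i ≤ a v := by
  obtain ⟨u, hu⟩ := Finite.exists_max a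
  have : Nonempty {i // i ≠ u} := nonempty_subtype.mpr (exists_ne u)
  obtain ⟨⟨v, hvu⟩, hv⟩ := Finite.exists_max (fun i : {i // i ≠ u} => a i)
  exact ⟨u, v, hvu.symm, hu, fun i hi => hv ⟨i, hi⟩⟩

lemma X_mul_X_eq_monomial {R : Type*} [CommSemiring R] (u v : σ) :
    (X u * X v : MvPolynomial σ R) = monomial (edgeExponent u v) 1 := by
  rw [X, X, monomial_mul, one_mul, edgeExponent]

lemma finrank_restrictSupport {R : Type*} [CommRing R] [Nontrivial R] (s : Finset (σ →₀ ℕ)) :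
    Module.finrank R (restrictSupport R (s : Set (σ →₀ ℕ))) = #s := by
  rw [Module.finrank_eq_card_basis (basisRestrictSupport R _)]
  simp

variable [DecidableEq σ]

lemma edgeExponent_apply (u v i : σ) :
    edgeExponent u v i = (if i = u then 1 else 0) + (if i = v then 1 else 0) := by
  simp [edgeExponent, Finsupp.single_apply, eq_comm]

lemma edgeExponent_apply_le_one {u v : σ} (h : u ≠ v) (i : σ) : edgeExponent u v i ≤ 1 := by
  rw [edgeExponent_apply]
  split_ifs <;> simp_all

variable [Fintype σ]

variable (σ) in
def boundedExponents (j : ℕ) : Finset (σ →₀ ℕ) :=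
  {a ∈ finsuppAntidiag univ (2 * j) | ∀ i, a i ≤ j}

lemma sum_edgeExponent_apply (u v : σ) : ∑ i, edgeExponent u v i = 2 := by
  simp [edgeExponent_apply, sum_add_distrib]

lemma add_le_sum_of_ne (a : σ → ℕ) {u v : σ} (h : u ≠ v) : a u + a v ≤ ∑ i, a i := by
  rw [← sum_pair h]
  exact sum_le_sum_of_subset (subset_univ _)

lemma mem_boundedExponents {j : ℕ} {a : σ →₀ ℕ} :
    a ∈ boundedExponents σ j ↔ ∑ i, a i = 2 * j ∧ ∀ i, a i ≤ j := by
  simp [boundedExponents]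

lemma exists_ne_pos_pos_of_mem_boundedExponents_succ {j : ℕ} {a : σ →₀ ℕ}
    (ha : a ∈ boundedExponents σ (j + 1)) :
    ∃ u v, u ≠ v ∧ 0 < a u ∧ 0 < a v ∧ ∀ i, i ≠ u → i ≠ v → a i ≤ j := by
  obtain ⟨hsum, hle⟩ := mem_boundedExponents.mp ha
  have : Nontrivial σ := by
    rw [← Fintype.one_lt_card_iff_nontrivial]
    by_contra! hcard
    have := (sum_le_card_nsmul univ (fun i => a i) (j + 1) fun i _ => hle i).trans
      (Nat.mul_le_mul_right (j + 1) hcard)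
    omega
  obtain ⟨u, v, huv, hu, hv⟩ := exists_ne_forall_le a
  have hv_pos : 0 < a v := by
    by_contra! h
    have : ∑ i, a i = a u :=
      Fintype.sum_eq_single u fun i hi => Nat.le_zero.mp ((hv i hi).trans h)
    have := hle u
    omega
  refine ⟨u, v, huv, hv_pos.trans_le (hu v), hv_pos, fun i hiu hiv => ?_⟩
  by_contra! h
  have h3 : ∑ x ∈ {u, v, i}, a x ≤ ∑ x, a x := sum_le_sum_of_subset (subset_univ _)
  rw [sum_insert (by simp [huv, hiu.symm]), sum_pair hiv.symm] at h3
  have := hu i; have := hv i hiu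
  omega

lemma exists_add_edgeExponent_of_mem_boundedExponents_succ {j : ℕ} {a : σ →₀ ℕ}
    (ha : a ∈ boundedExponents σ (j + 1)) :
    ∃ u v, u ≠ v ∧ ∃ b ∈ boundedExponents σ j, a = b + edgeExponent u v := by
  obtain ⟨u, v, huv, hu, hv, hother⟩ := exists_ne_pos_pos_of_mem_boundedExponents_succ ha
  obtain ⟨hsum, hle⟩ := mem_boundedExponents.mp ha
  have hea : edgeExponent u v ≤ a := by
    intro i
    rw [edgeExponent_apply]
    split_ifs with hiu hiv
    · exact absurd (hiu.symm.trans hiv) huv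
    all_goals subst_vars; omega
  refine ⟨u, v, huv, a - edgeExponent u v, mem_boundedExponents.mpr ⟨?_, fun i => ?_⟩,
    (tsub_add_cancel_of_le hea).symm⟩
  · have h2 : ∑ i, (a - edgeExponent u v) i + ∑ i, edgeExponent u v i = ∑ i, a i := by
      rw [← sum_add_distrib]
      simp_rw [← Finsupp.add_apply, tsub_add_cancel_of_le hea]
    rw [sum_edgeExponent_apply] at h2
    omega
  · rw [Finsupp.tsub_apply, edgeExponent_apply]
    have := hle i
    split_ifs with hiu hiv hiv'
    · exact absurd (hiu.symm.trans hiv) huv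
    · omega
    · omega
    · simpa using hother i hiu hiv'

lemma add_edgeExponent_mem_boundedExponents_succ {j : ℕ} {b : σ →₀ ℕ}
    (hb : b ∈ boundedExponents σ j) {u v : σ} (huv : u ≠ v) :
    b + edgeExponent u v ∈ boundedExponents σ (j + 1) := by
  rw [mem_boundedExponents] at hb ⊢
  refine ⟨?_, fun i => add_le_add (hb.2 i) (edgeExponent_apply_le_one huv i)⟩
  calc ∑ i, (b + edgeExponent u v) i = ∑ i, b i + ∑ i, edgeExponent u v i := sum_add_distrib
    _ = 2 * (j + 1) := by rw [hb.1, sum_edgeExponent_apply]; ring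

lemma mem_boundedExponents_succ {j : ℕ} {a : σ →₀ ℕ} :
    a ∈ boundedExponents σ (j + 1) ↔
      ∃ u v, u ≠ v ∧ ∃ b ∈ boundedExponents σ j, a = b + edgeExponent u v := by
  refine ⟨exists_add_edgeExponent_of_mem_boundedExponents_succ, ?_⟩
  rintro ⟨u, v, huv, b, hb, rfl⟩
  exact add_edgeExponent_mem_boundedExponents_succ hb huv

lemma mem_boundedExponents_iff_exists_sum {j : ℕ} {a : σ →₀ ℕ} :
    a ∈ boundedExponents σ j ↔
      ∃ u v : Fin j → σ, (∀ t, u t ≠ v t) ∧ a = ∑ t, edgeExponent (u t) (v t) := by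
  induction j generalizing a with
  | zero => simp [mem_boundedExponents, Finsupp.ext_iff]
  | succ j ih =>
    rw [mem_boundedExponents_succ]
    constructor
    · rintro ⟨u, v, huv, b, hb, rfl⟩
      obtain ⟨us, vs, h, rfl⟩ := ih.1 hb
      refine ⟨Fin.snoc us u, Fin.snoc vs v, fun t => ?_, by simp [Fin.sum_univ_castSucc]⟩
      induction t using Fin.lastCases with
      | last => simpa using huv
      | cast t => simpa using h t
    · rintro ⟨us, vs, h, rfl⟩
      exact ⟨us (Fin.last j), vs (Fin.last j), h _, _, ih.2 ⟨_, _, fun t => h _, rfl⟩,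
        Fin.sum_univ_castSucc _⟩

lemma mem_finsuppAntidiag_univ {n : ℕ} {a : σ →₀ ℕ} :
    a ∈ finsuppAntidiag univ n ↔ a.degree = n := by
  simp [Finsupp.degree_eq_sum]

lemma card_filter_le_apply_finsuppAntidiag (i : σ) (d k : ℕ) :
    #{a ∈ finsuppAntidiag univ (d + k) | k ≤ a i} =
      #(finsuppAntidiag (univ : Finset σ) d) := by
  refine card_nbij' (· - Finsupp.single i k) (· + Finsupp.single i k) ?_ ?_ ?_ ?_
  · intro a ha
    simp only [coe_filter, Set.mem_ofPred_eq, mem_finsuppAntidiag_univ, mem_coe] at ha ⊢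
    have h := congr_arg Finsupp.degree (tsub_add_cancel_of_le (Finsupp.single_le_iff.mpr ha.2))
    rw [map_add, Finsupp.degree_single, ha.1] at h
    omega
  · intro b hb
    simp only [coe_filter, Set.mem_ofPred_eq, mem_finsuppAntidiag_univ, mem_coe] at hb ⊢
    simp [hb]
  · intro a ha
    simp only [coe_filter, Set.mem_ofPred_eq] at ha
    exact tsub_add_cancel_of_le (Finsupp.single_le_iff.mpr ha.2)
  · intro b _
    exact add_tsub_cancel_right b _

lemma card_boundedExponents_succ (j : ℕ) :
    #(boundedExponents σ (j + 1)) + Fintype.card σ * #(finsuppAntidiag (univ : Finset σ) j) =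
      #(finsuppAntidiag (univ : Finset σ) (2 * (j + 1))) := by
  set T := finsuppAntidiag (univ : Finset σ) (2 * (j + 1))
  have hbad :
      {a ∈ T | ¬∀ i, a i ≤ j + 1} = univ.biUnion fun i => {a ∈ T | j + 2 ≤ a i} := by
    ext a
    simp only [mem_filter, mem_biUnion, mem_univ, true_and, not_forall, not_le]
    exact ⟨fun ⟨ha, i, hi⟩ => ⟨i, ha, hi⟩, fun ⟨i, ha, hi⟩ => ⟨ha, i, hi⟩⟩
  have hdisj :
      ((univ : Finset σ) : Set σ).PairwiseDisjoint fun i => {a ∈ T | j + 2 ≤ a i} := by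
    intro i _ i' _ hii'
    rw [Function.onFun, disjoint_filter]
    intro a ha hi hi'
    have := add_le_sum_of_ne a hii'
    rw [mem_finsuppAntidiag_univ, Finsupp.degree_eq_sum] at ha
    omega
  have hshift (i : σ) : #{a ∈ T | j + 2 ≤ a i} = #(finsuppAntidiag (univ : Finset σ) j) := by
    have h := card_filter_le_apply_finsuppAntidiag i j (j + 2)
    rwa [show j + (j + 2) = 2 * (j + 1) by ring] at h
  rw [← card_filter_add_card_filter_not (s := T) (fun a => ∀ i, a i ≤ j + 1), hbad,
    card_biUnion hdisj, sum_congr rfl fun i _ => hshift i, sum_const, card_univ, smul_eq_mul]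
  rfl

lemma card_boundedExponents_fin {n : ℕ} (hn : n ≠ 0) (j : ℕ) :
    #(boundedExponents (Fin (n + 1)) j) + (n + 1) * (j + n - 1).choose n =
      (2 * j + n).choose n := by
  cases j with
  | zero =>
    simp [boundedExponents, Nat.choose_eq_zero_of_lt (by omega : n - 1 < n), filter_singleton]
  | succ j =>
    have h := card_boundedExponents_succ (σ := Fin (n + 1)) j
    rwa [card_finsuppAntidiag_nat_eq_choose, card_finsuppAntidiag_nat_eq_choose, card_univ,
      Fintype.card_fin, show n + 1 + j - 1 = j + n by omega, Nat.choose_symm_add,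
      show n + 1 + 2 * (j + 1) - 1 = 2 * (j + 1) + n by omega, Nat.choose_symm_add,
      show j + n = j + 1 + n - 1 by omega] at h

lemma edgeSubringComponent_eq_restrictSupport (K : Type*) [Field K] (n j : ℕ) :
    edgeSubringComponent K n j = restrictSupport K ↑(boundedExponents (Fin (n + 1)) j) := by
  rw [edgeSubringComponent, restrictSupport_eq_span]
  congr 1
  ext f
  simp only [Set.mem_ofPred_eq, Set.mem_image, mem_coe, mem_boundedExponents_iff_exists_sum]
  constructor
  · rintro ⟨g, hg, rfl⟩
    choose u v huv hg using hg
    refine ⟨_, ⟨u, v, huv, rfl⟩, ?_⟩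
    simp_rw [hg, X_mul_X_eq_monomial, monomial_sum_one]
  · rintro ⟨_, ⟨u, v, huv, rfl⟩, rfl⟩
    refine ⟨fun t => X (u t) * X (v t), fun t => ⟨_, _, huv t, rfl⟩, ?_⟩
    simp_rw [X_mul_X_eq_monomial, monomial_sum_one]

lemma Nat.add_one_lt_two_pow {n : ℕ} (hn : 2 ≤ n) : n + 1 < 2 ^ n := by
  induction n, hn using Nat.le_induction with
  | base => norm_num
  | succ k hk ih => rw [pow_succ]; omega

namespace Polynomial

open scoped Nat

noncomputable def edgeHilbertPoly (n : ℕ) : ℚ[X] :=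
  C (n ! : ℚ)⁻¹ *
    ((ascPochhammer ℚ n).comp (C 2 * X + 1) - C ((n : ℚ) + 1) * ascPochhammer ℚ n)

lemma ascPochhammer_eval_natCast_eq_factorial_mul_choose (n m : ℕ) :
    (ascPochhammer ℚ n).eval (m : ℚ) = n ! * ((m + n - 1).choose n : ℚ) := by
  rw [ascPochhammer_nat_eq_natCast_ascFactorial, Nat.ascFactorial_eq_factorial_mul_choose',
    Nat.cast_mul]

lemma edgeHilbertPoly_eval (n j : ℕ) :
    (edgeHilbertPoly n).eval (j : ℚ) =
      (2 * j + n).choose n - (n + 1) * ((j + n - 1).choose n : ℚ) := by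
  have h2j : (C 2 * X + 1 : ℚ[X]).eval (j : ℚ) = ((2 * j + 1 : ℕ) : ℚ) := by simp
  have hfac : (n ! : ℚ) ≠ 0 := by positivity
  rw [edgeHilbertPoly, eval_mul, eval_C, eval_sub, eval_comp, h2j, eval_mul, eval_C,
    ascPochhammer_eval_natCast_eq_factorial_mul_choose,
    ascPochhammer_eval_natCast_eq_factorial_mul_choose, Nat.add_right_comm, Nat.add_sub_cancel]
  field_simp

lemma natDegree_edgeHilbertPoly_and_leadingCoeff {n : ℕ} (hn : 2 ≤ n) :
    (edgeHilbertPoly n).natDegree = n ∧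
      (edgeHilbertPoly n).leadingCoeff = (2 ^ n - (n + 1)) / n ! := by
  have hmonic := monic_ascPochhammer ℚ n
  have hdeg := ascPochhammer_natDegree ℚ n
  have hlin : (C 2 * X + 1 : ℚ[X]).natDegree = 1 := natDegree_linear two_ne_zero
  have hA : ((ascPochhammer ℚ n).comp (C 2 * X + 1)).natDegree = n := by
    rw [natDegree_comp, hlin, hdeg, mul_one]
  have hAc : ((ascPochhammer ℚ n).comp (C 2 * X + 1)).coeff n = 2 ^ n := by
    have h := coeff_natDegree (p := (ascPochhammer ℚ n).comp (C 2 * X + 1))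
    rw [hA] at h
    rw [h, leadingCoeff_comp (by rw [hlin]; exact one_ne_zero), hmonic.leadingCoeff,
      one_mul, ← C_1, leadingCoeff_linear two_ne_zero, hdeg]
  have hB : (C ((n : ℚ) + 1) * ascPochhammer ℚ n).natDegree ≤ n :=
    (natDegree_C_mul_le _ _).trans hdeg.le
  have hBc : (C ((n : ℚ) + 1) * ascPochhammer ℚ n).coeff n = n + 1 := by
    have h := hmonic.coeff_natDegree
    rw [hdeg] at h
    rw [coeff_C_mul, h, mul_one]
  have hne : (2 : ℚ) ^ n - (n + 1) ≠ 0 :=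
    sub_ne_zero.mpr (by exact_mod_cast (Nat.add_one_lt_two_pow hn).ne')
  have hnum : ((ascPochhammer ℚ n).comp (C 2 * X + 1) -
      C ((n : ℚ) + 1) * ascPochhammer ℚ n).natDegree = n :=
    natDegree_eq_of_le_of_coeff_ne_zero ((natDegree_sub_le _ _).trans (max_le hA.le hB))
      (by rwa [coeff_sub, hAc, hBc])
  have hfac : (n ! : ℚ)⁻¹ ≠ 0 := by positivity
  refine ⟨by rw [edgeHilbertPoly, natDegree_C_mul hfac, hnum], ?_⟩
  rw [edgeHilbertPoly, leadingCoeff_mul, leadingCoeff_C, leadingCoeff, hnum, coeff_sub, hAc, hBc,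
    div_eq_inv_mul]

end Polynomial

/-- (Example `ex:hypersimplex`, case `m = n+1`.)  For `n ≥ 2`, the edge subring of the
complete graph `K_{n+1}` has multiplicity `2^n - (n+1)`: its Hilbert function agrees with a
polynomial of degree `n` in `j` with leading coefficient `(2^n - (n+1))/n!`. -/
theorem complete_graph_edge_subring_multiplicity {K : Type*} [Field K] (n : ℕ) (hn : 2 ≤ n) :
    ∃ p : Polynomial ℚ,
      (∀ j : ℕ, p.eval (j : ℚ) = Module.finrank K (edgeSubringComponent K n j)) ∧
      p.natDegree = n ∧
      p.leadingCoeff = ((2 : ℚ) ^ n - (n + 1)) / (Nat.factorial n) := by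
  obtain ⟨hdeg, hlc⟩ := Polynomial.natDegree_edgeHilbertPoly_and_leadingCoeff hn
  refine ⟨Polynomial.edgeHilbertPoly n, fun j => ?_, hdeg, hlc⟩
  have hcount := card_boundedExponents_fin (by omega : n ≠ 0) j
  rw [edgeSubringComponent_eq_restrictSupport, finrank_restrictSupport,
    Polynomial.edgeHilbertPoly_eval, sub_eq_iff_eq_add]
  exact_mod_cast hcount.symm
end BoundedExponents
end
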